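/- Let h_n(k, m, ℓ, j) denote the number of involutions π ∈ I_n(321, 4123) with cyc(π) = k, fix(π) = m, exc(π) = ℓ, and inv(π) = j, with the convention that h_m(·) = 0 whenever any index is negative (and h_0(0,0,0,0) = 1). Then for all n ≥ 5, h_n(k, m, ℓ, j) = h_{n-1}(k-1, m-1, ℓ, j) + h_{n-2}(k-1, m, ℓ-1, j-1) + h_{n-4}(k-2, m, ℓ-2, j-4). -/

import Mathlib

/-!
Every `π ∈ I_n(321, 4123)`, `n ≥ 1`, is a direct sum `β ⊕ τ` whose first block `β` is `1`, `21`
or `3412`. Indeed (0-based) `π 0 ≥ 3` would put a `321` or a `4123` among the positions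
`0, π 1, π 2, π 0`, and `π 0 = 2` forces `π 1 = 3` for the same reason. Both patterns begin with
their largest letter, so an occurrence in a direct sum stays inside one block, and `τ` ranges
over all of `I_{n-|β|}(321, 4123)`. Finally `fix`, `exc`, `inv` are additive over direct sums, and
so is `cyc` on involutions, where `2 cyc = n + fix`; the three blocks contribute `(1, 1, 0, 0)`,
`(1, 0, 1, 1)` and `(2, 0, 2, 4)` to `(cyc, fix, exc, inv)`.
-/

open Equiv

/-- `π` contains the pattern whose one-line notation (relative order) is given by `σ`. -/
def ContainsPat {n k : ℕ} (π : Perm (Fin n)) (σ : Fin k → ℕ) : Prop :=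
  ∃ f : Fin k → Fin n, StrictMono f ∧ ∀ a b : Fin k, σ a < σ b ↔ π (f a) < π (f b)

/-- `π` avoids the pattern `σ`. -/
def AvoidsPat {n k : ℕ} (π : Perm (Fin n)) (σ : Fin k → ℕ) : Prop := ¬ ContainsPat π σ

/-- Number of cycles in the disjoint cycle decomposition, fixed points counted as cycles. -/
def cycCount {n : ℕ} (π : Perm (Fin n)) : ℕ :=
  π.cycleType.card + (Finset.univ.filter (fun x => π x = x)).card

/-- Number of fixed points. -/
def fixCount {n : ℕ} (π : Perm (Fin n)) : ℕ :=
  (Finset.univ.filter (fun x => π x = x)).card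

/-- Number of excedances. -/
def excCount {n : ℕ} (π : Perm (Fin n)) : ℕ :=
  (Finset.univ.filter (fun x => x < π x)).card

/-- Number of inversions. -/
def invCount {n : ℕ} (π : Perm (Fin n)) : ℕ :=
  (Finset.univ.filter (fun p : Fin n × Fin n => p.1 < p.2 ∧ π p.2 < π p.1)).card


/-- `h n k m l j` = number of involutions `π ∈ I_n(321, 4123)` with `cyc π = k`,
`fix π = m`, `exc π = l`, `inv π = j`. -/
noncomputable def h (n k m l j : ℕ) : ℕ :=
  Nat.card {π : Perm (Fin n) // π = π⁻¹ ∧ AvoidsPat π ![3,2,1] ∧ AvoidsPat π ![4,1,2,3] ∧ cycCount π = k ∧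
    fixCount π = m ∧ excCount π = l ∧ invCount π = j}

/-- The counts extended to integer indices, equal to `0` when any index is negative
(note `h 0 0 0 0 0 = 1`). -/
noncomputable def hZ (n k m l j : ℤ) : ℤ :=
  if 0 ≤ n ∧ 0 ≤ k ∧ 0 ≤ m ∧ 0 ≤ l ∧ 0 ≤ j then
    (h n.toNat k.toNat m.toNat l.toNat j.toNat : ℤ) else 0

lemma Fin.mem_range_castAdd_iff {d m : ℕ} (x : Fin (d + m)) :
    x ∈ Set.range (Fin.castAdd m) ↔ (x : ℕ) < d :=
  ⟨by rintro ⟨i, rfl⟩; simp, fun hx => ⟨⟨x, hx⟩, rfl⟩⟩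

namespace Equiv.Perm

variable {d m : ℕ}

def sumPerm (σ : Perm (Fin d)) (τ : Perm (Fin m)) : Perm (Fin (d + m)) :=
  permCongr finSumFinEquiv (sumCongr σ τ)

@[simp]
lemma sumPerm_castAdd (σ : Perm (Fin d)) (τ : Perm (Fin m)) (i : Fin d) :
    sumPerm σ τ (Fin.castAdd m i) = Fin.castAdd m (σ i) := by
  simp [sumPerm, permCongr_apply]

@[simp]
lemma sumPerm_natAdd (σ : Perm (Fin d)) (τ : Perm (Fin m)) (i : Fin m) :
    sumPerm σ τ (Fin.natAdd d i) = Fin.natAdd d (τ i) := by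
  simp [sumPerm, permCongr_apply]

lemma sumPerm_inv (σ : Perm (Fin d)) (τ : Perm (Fin m)) :
    (sumPerm σ τ)⁻¹ = sumPerm σ⁻¹ τ⁻¹ := by
  refine inv_eq_of_mul_eq_one_right (Equiv.ext fun x => ?_)
  induction x using Fin.addCases <;> simp

lemma sumPerm_inj {σ σ' : Perm (Fin d)} {τ τ' : Perm (Fin m)} :
    sumPerm σ τ = sumPerm σ' τ' ↔ σ = σ' ∧ τ = τ' := by
  refine ⟨fun h => ⟨Equiv.ext fun i => ?_, Equiv.ext fun i => ?_⟩, fun ⟨hσ, hτ⟩ => hσ ▸ hτ ▸ rfl⟩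
  · simpa using DFunLike.congr_fun h (Fin.castAdd m i)
  · simpa using DFunLike.congr_fun h (Fin.natAdd d i)

lemma fixCount_sumPerm (σ : Perm (Fin d)) (τ : Perm (Fin m)) :
    fixCount (sumPerm σ τ) = fixCount σ + fixCount τ := by
  simp only [fixCount, Finset.card_filter, Fin.sum_univ_add, sumPerm_castAdd, sumPerm_natAdd,
    Fin.castAdd_inj, Fin.natAdd_inj]

lemma excCount_sumPerm (σ : Perm (Fin d)) (τ : Perm (Fin m)) :
    excCount (sumPerm σ τ) = excCount σ + excCount τ := by
  simp only [excCount, Finset.card_filter, Fin.sum_univ_add, sumPerm_castAdd, sumPerm_natAdd,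
    (Fin.strictMono_castAdd m).lt_iff_lt, Fin.natAdd_lt_natAdd_iff]

lemma invCount_sumPerm (σ : Perm (Fin d)) (τ : Perm (Fin m)) :
    invCount (sumPerm σ τ) = invCount σ + invCount τ := by
  have cross (i : Fin d) (j : Fin m) : Fin.castAdd m i < Fin.natAdd d j := by
    simp only [Fin.lt_def, Fin.val_castAdd, Fin.val_natAdd]
    omega
  simp only [invCount, Finset.card_filter, Fintype.sum_prod_type, Fin.sum_univ_add,
    sumPerm_castAdd, sumPerm_natAdd, (Fin.strictMono_castAdd m).lt_iff_lt,
    Fin.natAdd_lt_natAdd_iff, cross, (cross _ _).not_gt, and_false, false_and, if_false,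
    Finset.sum_const_zero, add_zero, zero_add]

lemma val_sumPerm_lt_iff (σ : Perm (Fin d)) (τ : Perm (Fin m)) (x : Fin (d + m)) :
    (sumPerm σ τ x : ℕ) < d ↔ (x : ℕ) < d := by
  induction x using Fin.addCases <;> simp

end Equiv.Perm

open Equiv.Perm

section Patterns

variable {n N k : ℕ}

lemma containsPat_iff_of_semiconj {e : Fin n → Fin N} (he : StrictMono e) {π : Perm (Fin N)}
    {σ : Perm (Fin n)} (hπ : ∀ x, π (e x) = e (σ x)) (p : Fin k → ℕ) :
    ContainsPat σ p ↔ ∃ f : Fin k → Fin N, (∀ a, f a ∈ Set.range e) ∧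
      StrictMono f ∧ ∀ a b, p a < p b ↔ π (f a) < π (f b) := by
  constructor
  · rintro ⟨g, hg, hgp⟩
    exact ⟨e ∘ g, fun a => ⟨g a, rfl⟩, he.comp hg, fun a b => by simp [hπ, he.lt_iff_lt, hgp]⟩
  · rintro ⟨f, hfe, hf, hfp⟩
    choose g hg using hfe
    obtain rfl : e ∘ g = f := funext hg
    exact ⟨g, fun a b hab => he.lt_iff_lt.1 (hf hab),
      fun a b => by simpa [hπ, he.lt_iff_lt] using hfp a b⟩

lemma containsPat_of_lt_imp {π : Perm (Fin n)} {p : Fin k → ℕ} (hp : Function.Injective p)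
    {f : Fin k → Fin n} (hf : StrictMono f) (h : ∀ a b, p a < p b → π (f a) < π (f b)) :
    ContainsPat π p := by
  refine ⟨f, hf, fun a b => ⟨h a b, fun hlt => ?_⟩⟩
  rcases lt_trichotomy (p a) (p b) with hab | hab | hab
  · exact hab
  · exact absurd hlt (hp hab ▸ lt_irrefl _)
  · exact absurd (h b a hab) hlt.not_gt

lemma containsPat_321 {π : Perm (Fin n)} {a b c : Fin n} (hab : a < b) (hbc : b < c)
    (hcb : π c < π b) (hba : π b < π a) : ContainsPat π ![3,2,1] := by
  refine containsPat_of_lt_imp (f := ![a, b, c]) (by decide) (Fin.strictMono_iff_lt_succ.2 ?_) ?_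
  · intro i; fin_cases i <;> assumption
  · intro i j; fin_cases i <;> fin_cases j <;> simp <;> order

lemma containsPat_4123 {π : Perm (Fin n)} {a b c e : Fin n} (hab : a < b) (hbc : b < c)
    (hce : c < e) (hbc' : π b < π c) (hce' : π c < π e) (hea : π e < π a) :
    ContainsPat π ![4,1,2,3] := by
  refine containsPat_of_lt_imp (f := ![a, b, c, e]) (by decide)
    (Fin.strictMono_iff_lt_succ.2 ?_) ?_
  · intro i; fin_cases i <;> assumption
  · intro i j; fin_cases i <;> fin_cases j <;> simp <;> order

variable {d m : ℕ}

lemma containsPat_sumPerm_iff {p : Fin (k + 1) → ℕ} (hp : ∀ a ≠ 0, p a < p 0)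
    (σ : Perm (Fin d)) (τ : Perm (Fin m)) :
    ContainsPat (sumPerm σ τ) p ↔ ContainsPat σ p ∨ ContainsPat τ p := by
  rw [containsPat_iff_of_semiconj (Fin.strictMono_castAdd m) (sumPerm_castAdd σ τ),
    containsPat_iff_of_semiconj (Fin.strictMono_natAdd d) (sumPerm_natAdd σ τ),
    ← exists_or]
  refine ⟨fun ⟨f, hf, hfp⟩ => ⟨f, ?_⟩, fun ⟨f, hf⟩ => ?_⟩
  · simp only [Fin.mem_range_castAdd_iff, Fin.range_natAdd, Set.mem_ofPred_eq]
    -- If the occurrence starts in the left block, all its values lie below `π (f 0) < d`.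
    rcases lt_or_ge (f 0 : ℕ) d with h0 | h0
    · refine Or.inl ⟨fun a => ?_, hf, hfp⟩
      by_contra hfa
      have hlt : sumPerm σ τ (f a) < sumPerm σ τ (f 0) :=
        (hfp a 0).1 (hp a fun ha => hfa (ha ▸ h0))
      have := (val_sumPerm_lt_iff σ τ (f 0)).2 h0
      have := mt (val_sumPerm_lt_iff σ τ (f a)).1 hfa
      rw [Fin.lt_def] at hlt
      omega
    · exact Or.inr ⟨fun a => h0.trans (hf.monotone (Fin.zero_le a)), hf, hfp⟩
  · rcases hf with ⟨-, hf⟩ | ⟨-, hf⟩ <;> exact ⟨f, hf⟩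

lemma avoidsPat_sumPerm_iff {p : Fin (k + 1) → ℕ} (hp : ∀ a ≠ 0, p a < p 0)
    (σ : Perm (Fin d)) (τ : Perm (Fin m)) :
    AvoidsPat (sumPerm σ τ) p ↔ AvoidsPat σ p ∧ AvoidsPat τ p := by
  simp only [AvoidsPat, containsPat_sumPerm_iff hp, not_or]

end Patterns

section Involutions

variable {n : ℕ}

lemma apply_apply_of_eq_inv {π : Perm (Fin n)} (h : π = π⁻¹) (x : Fin n) : π (π x) = x :=
  (DFunLike.congr_fun h (π x)).trans (π.symm_apply_apply x)

/-- An involution has one cycle per fixed point and one per pair of swapped points. -/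
lemma two_mul_cycCount {π : Perm (Fin n)} (h : π = π⁻¹) : 2 * cycCount π = n + fixCount π := by
  have hsq : π ^ 2 = 1 := by rw [sq]; exact mul_eq_one_iff_eq_inv.2 h
  have hcycle : ∀ a ∈ π.cycleType, a = 2 := fun a ha =>
    le_antisymm
      (Nat.le_of_dvd two_pos ((dvd_of_mem_cycleType ha).trans (orderOf_dvd_of_pow_eq_one hsq)))
      (two_le_of_mem_cycleType ha)
  have hsupp : π.support.card = 2 * π.cycleType.card := by
    rw [← sum_cycleType, Multiset.eq_replicate.2 ⟨rfl, hcycle⟩, Multiset.sum_replicate,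
      Multiset.card_replicate, smul_eq_mul, mul_comm]
  have hsplit : fixCount π + π.support.card = n := by
    rw [fixCount, support, Finset.card_filter_add_card_filter_not, Finset.card_univ,
      Fintype.card_fin]
  have hcyc : cycCount π = π.cycleType.card + fixCount π := rfl
  omega

end Involutions

def I321_4123 (n : ℕ) : Set (Perm (Fin n)) :=
  {π | π = π⁻¹ ∧ AvoidsPat π ![3,2,1] ∧ AvoidsPat π ![4,1,2,3]}

/-- The statistics `(cyc, fix, exc, inv)`, taken in `ℤ` so that a negative index gives an empty
count, as in `hZ`. -/
def stats {n : ℕ} (π : Perm (Fin n)) : ℤ × ℤ × ℤ × ℤ :=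
  (cycCount π, fixCount π, excCount π, invCount π)

noncomputable def count (n : ℕ) (s : ℤ × ℤ × ℤ × ℤ) : ℕ :=
  Nat.card {π : Perm (Fin n) // π ∈ I321_4123 n ∧ stats π = s}

section DirectSum

variable {d m : ℕ}

lemma sumPerm_mem_I321_4123_iff {σ : Perm (Fin d)} {τ : Perm (Fin m)} :
    sumPerm σ τ ∈ I321_4123 (d + m) ↔ σ ∈ I321_4123 d ∧ τ ∈ I321_4123 m := by
  simp only [I321_4123, Set.mem_ofPred_eq, sumPerm_inv, sumPerm_inj,
    avoidsPat_sumPerm_iff (k := 2) (p := ![3,2,1]) (by decide),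
    avoidsPat_sumPerm_iff (k := 3) (p := ![4,1,2,3]) (by decide)]
  tauto

lemma stats_sumPerm {σ : Perm (Fin d)} {τ : Perm (Fin m)} (hσ : σ = σ⁻¹) (hτ : τ = τ⁻¹) :
    stats (sumPerm σ τ) = stats σ + stats τ := by
  have hinv : sumPerm σ τ = (sumPerm σ τ)⁻¹ := by rw [sumPerm_inv, ← hσ, ← hτ]
  have hcyc := two_mul_cycCount hinv
  have := two_mul_cycCount hσ
  have := two_mul_cycCount hτ
  rw [fixCount_sumPerm] at hcyc
  simp only [stats, fixCount_sumPerm, excCount_sumPerm, invCount_sumPerm, Prod.mk_add_mk,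
    Nat.cast_add, Prod.mk.injEq, and_true]
  omega

lemma exists_eq_sumPerm {β : Perm (Fin d)} {π : Perm (Fin (d + m))}
    (h : ∀ i, π (Fin.castAdd m i) = Fin.castAdd m (β i)) : ∃ τ, π = sumPerm β τ := by
  have hmaps : Set.MapsTo (permCongr finSumFinEquiv.symm π) (Set.range Sum.inl)
      (Set.range Sum.inl) := by
    rintro _ ⟨i, rfl⟩
    exact ⟨β i, by simp [permCongr_apply, h]⟩
  obtain ⟨⟨σ, τ⟩, hστ⟩ := mem_sumCongrHom_range_of_perm_mapsTo_inl hmaps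
  have hπ : π = sumPerm σ τ := by
    change π = permCongr finSumFinEquiv (sumCongrHom _ _ (σ, τ))
    rw [hστ]
    exact Equiv.ext fun x => by simp [permCongr_apply]
  obtain rfl : σ = β := Equiv.ext fun i => by simpa [hπ] using h i
  exact ⟨τ, hπ⟩

end DirectSum

def StartsWith {d n : ℕ} (β : Perm (Fin d)) (π : Perm (Fin n)) : Prop :=
  ∀ i : Fin d, ∀ hi : (i : ℕ) < n, (π ⟨i, hi⟩ : ℕ) = β i

section Blocks

variable {d m n : ℕ}

lemma startsWith_iff {β : Perm (Fin d)} {π : Perm (Fin (d + m))} :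
    StartsWith β π ↔ ∀ i, π (Fin.castAdd m i) = Fin.castAdd m (β i) :=
  ⟨fun h i => Fin.ext (h i _), fun h i _ => congrArg Fin.val (h i)⟩

lemma card_startsWith {β : Perm (Fin d)} (hβ : β ∈ I321_4123 d) (hdn : d ≤ n)
    (s : ℤ × ℤ × ℤ × ℤ) :
    Nat.card {π : Perm (Fin n) // (π ∈ I321_4123 n ∧ stats π = s) ∧ StartsWith β π} =
      count (n - d) (s - stats β) := by
  obtain ⟨m, rfl⟩ := Nat.exists_eq_add_of_le hdn
  rw [Nat.add_sub_cancel_left, count]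
  symm
  refine Nat.card_congr (Equiv.ofBijective (fun τ => ⟨sumPerm β τ.1, ?_⟩) ⟨?_, ?_⟩)
  · obtain ⟨hτ, hs⟩ := τ.2
    refine ⟨⟨sumPerm_mem_I321_4123_iff.2 ⟨hβ, hτ⟩, ?_⟩, startsWith_iff.2 fun i => by simp⟩
    rw [stats_sumPerm hβ.1 hτ.1, hs, add_sub_cancel]
  · exact fun τ τ' h => Subtype.ext (sumPerm_inj.1 (congrArg Subtype.val h)).2
  · rintro ⟨π, ⟨hπ, hs⟩, hstart⟩
    obtain ⟨τ, rfl⟩ := exists_eq_sumPerm (startsWith_iff.1 hstart)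
    have hτ := (sumPerm_mem_I321_4123_iff.1 hπ).2
    exact ⟨⟨τ, hτ, by rw [← hs, stats_sumPerm hβ.1 hτ.1, add_sub_cancel_left]⟩, rfl⟩

end Blocks

section FirstBlock

variable {n : ℕ} {π : Perm (Fin n)}

lemma val_apply_zero_le_two (hπ : π ∈ I321_4123 n) (h0 : 0 < n) : (π ⟨0, h0⟩ : ℕ) ≤ 2 := by
  obtain ⟨hinv, h321, h4123⟩ := hπ
  by_contra! hc
  have := (π ⟨0, h0⟩).isLt
  obtain ⟨x₁, hx₁⟩ : ∃ x : Fin n, (x : ℕ) = 1 := ⟨⟨1, by omega⟩, rfl⟩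
  obtain ⟨x₂, hx₂⟩ : ∃ x : Fin n, (x : ℕ) = 2 := ⟨⟨2, by omega⟩, rfl⟩
  have := apply_apply_of_eq_inv hinv ⟨0, h0⟩
  have := apply_apply_of_eq_inv hinv x₁
  have := apply_apply_of_eq_inv hinv x₂
  rcases lt_or_gt_of_ne (show π x₁ ≠ π ⟨0, h0⟩ by grind) with h₁ | h₁
  · exact h321 (containsPat_321 (a := ⟨0, h0⟩) (b := π x₁) (c := π ⟨0, h0⟩)
      (by grind) h₁ (by grind) (by grind))
  rcases lt_or_gt_of_ne (show π x₂ ≠ π x₁ by grind) with h₂ | h₂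
  · exact h321 (containsPat_321 (a := ⟨0, h0⟩) (b := π x₂) (c := π x₁)
      (by grind) h₂ (by grind) (by grind))
  · exact h4123 (containsPat_4123 (a := ⟨0, h0⟩) (b := π ⟨0, h0⟩)
      (by grind) h₁ h₂ (by grind) (by grind) (by grind))

lemma val_apply_one_eq_three (hπ : π ∈ I321_4123 n) (h0 : 0 < n) (h1 : 1 < n)
    (h : (π ⟨0, h0⟩ : ℕ) = 2) : (π ⟨1, h1⟩ : ℕ) = 3 := by
  obtain ⟨hinv, h321, h4123⟩ := hπ
  have := (π ⟨0, h0⟩).isLt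
  obtain ⟨x₂, hx₂⟩ : ∃ x : Fin n, (x : ℕ) = 2 := ⟨⟨2, by omega⟩, rfl⟩
  have := apply_apply_of_eq_inv hinv ⟨0, h0⟩
  have := apply_apply_of_eq_inv hinv ⟨1, h1⟩
  have : (π ⟨1, h1⟩ : ℕ) ≠ 1 := fun h₁ =>
    h321 (containsPat_321 (a := ⟨0, h0⟩) (b := ⟨1, h1⟩) (c := x₂)
      (by grind) (by grind) (by grind) (by grind))
  by_contra hne
  have := (π ⟨1, h1⟩).isLt
  obtain ⟨x₃, hx₃⟩ : ∃ x : Fin n, (x : ℕ) = 3 := ⟨⟨3, by grind⟩, rfl⟩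
  have := apply_apply_of_eq_inv hinv x₃
  rcases lt_or_gt_of_ne (show π x₃ ≠ π ⟨1, h1⟩ by grind) with h₃ | h₃
  · exact h321 (containsPat_321 (a := ⟨1, h1⟩) (b := x₃) (c := π ⟨1, h1⟩)
      (by grind) (by grind) (by grind) h₃)
  · exact h4123 (containsPat_4123 (a := ⟨1, h1⟩) (b := x₂) (c := π ⟨1, h1⟩)
      (by grind) (by grind) h₃ (by grind) (by grind) (by grind))

def perm3412 : Perm (Fin 4) := swap 0 2 * swap 1 3

lemma val_perm3412_apply (i : Fin 4) : (perm3412 i : ℕ) = ![2, 3, 0, 1] i := by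
  fin_cases i <;> rfl

lemma startsWith_trichotomy (hπ : π ∈ I321_4123 n) (h0 : 0 < n) :
    StartsWith (1 : Perm (Fin 1)) π ∨ StartsWith (swap (0 : Fin 2) 1) π ∨
      StartsWith perm3412 π := by
  have := apply_apply_of_eq_inv hπ.1 ⟨0, h0⟩
  have hle := val_apply_zero_le_two hπ h0
  interval_cases h : (π ⟨0, h0⟩ : ℕ)
  · left
    intro i hi
    fin_cases i
    simpa using h
  · right; left
    intro i hi
    fin_cases i <;> simp <;> grind
  · right; right
    have h1 : 1 < n := by have := (π ⟨0, h0⟩).isLt; omega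
    have := val_apply_one_eq_three hπ h0 h1 h
    have := apply_apply_of_eq_inv hπ.1 ⟨1, h1⟩
    intro i hi
    fin_cases i <;> simp [val_perm3412_apply] <;> grind

end FirstBlock

section Recurrence

lemma one_mem_I321_4123 : (1 : Perm (Fin 1)) ∈ I321_4123 1 := by
  refine ⟨by decide, ?_, ?_⟩ <;> unfold AvoidsPat ContainsPat StrictMono <;> decide

lemma swap_mem_I321_4123 : swap (0 : Fin 2) 1 ∈ I321_4123 2 := by
  refine ⟨by decide, ?_, ?_⟩ <;> unfold AvoidsPat ContainsPat StrictMono <;> decide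

set_option maxRecDepth 10000 in
lemma perm3412_mem_I321_4123 : perm3412 ∈ I321_4123 4 := by
  refine ⟨by decide, ?_, ?_⟩ <;> unfold AvoidsPat ContainsPat StrictMono <;> decide

lemma stats_one : stats (1 : Perm (Fin 1)) = (1, 1, 0, 0) := by decide

lemma stats_swap : stats (swap (0 : Fin 2) 1) = (1, 0, 1, 1) := by decide

lemma stats_perm3412 : stats perm3412 = (2, 0, 2, 4) := by decide

variable {n : ℕ}

lemma StartsWith.val_apply_zero {d : ℕ} [NeZero d] {β : Perm (Fin d)} {π : Perm (Fin n)}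
    (h : StartsWith β π) (hn : 0 < n) : (π ⟨0, hn⟩ : ℕ) = β 0 :=
  h 0 hn

lemma count_eq_add (hn : 4 ≤ n) (s : ℤ × ℤ × ℤ × ℤ) :
    count n s = count (n - 1) (s - (1, 1, 0, 0)) + count (n - 2) (s - (1, 0, 1, 1))
      + count (n - 4) (s - (2, 0, 2, 4)) := by
  classical
  have h0 : 0 < n := by omega
  let P : Perm (Fin n) → Prop := fun π => π ∈ I321_4123 n ∧ stats π = s
  have hsplit : {π // P π} ≃ {π // P π ∧ StartsWith (1 : Perm (Fin 1)) π} ⊕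
      ({π // P π ∧ StartsWith (swap (0 : Fin 2) 1) π} ⊕ {π // P π ∧ StartsWith perm3412 π}) := by
    refine (Equiv.subtypeEquivRight fun π => ?_).trans ((subtypeOrEquiv _ _ ?_).trans
      (Equiv.sumCongr (Equiv.refl _) (subtypeOrEquiv _ _ ?_)))
    · have := startsWith_trichotomy (π := π)
      tauto
    · refine disjoint_iff_inf_le.2 fun π ⟨⟨_, h₁⟩, h₂₃⟩ => ?_
      rcases h₂₃ with ⟨-, h₂⟩ | ⟨-, h₃⟩
      · exact absurd ((h₁.val_apply_zero h0).symm.trans (h₂.val_apply_zero h0)) (by decide)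
      · exact absurd ((h₁.val_apply_zero h0).symm.trans (h₃.val_apply_zero h0)) (by decide)
    · refine disjoint_iff_inf_le.2 fun π ⟨⟨_, h₂⟩, _, h₃⟩ => ?_
      exact absurd ((h₂.val_apply_zero h0).symm.trans (h₃.val_apply_zero h0)) (by decide)
  rw [count, Nat.card_congr hsplit, Nat.card_sum, Nat.card_sum, ← add_assoc,
    card_startsWith one_mem_I321_4123 (by omega), card_startsWith swap_mem_I321_4123 (by omega),
    card_startsWith perm3412_mem_I321_4123 hn, stats_one, stats_swap, stats_perm3412]

end Recurrence

lemma hZ_natCast (n : ℕ) (k m l j : ℤ) : hZ n k m l j = count n (k, m, l, j) := by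
  rw [hZ]
  split_ifs with hnonneg
  · obtain ⟨-, hk, hm, hl, hj⟩ := hnonneg
    lift k to ℕ using hk
    lift m to ℕ using hm
    lift l to ℕ using hl
    lift j to ℕ using hj
    simp only [Int.toNat_natCast, h, count, stats, I321_4123, Set.mem_ofPred_eq, Prod.mk.injEq,
      Nat.cast_inj, and_assoc]
  · have : IsEmpty {π : Perm (Fin n) // π ∈ I321_4123 n ∧ stats π = (k, m, l, j)} :=
      ⟨fun ⟨π, _, hs⟩ => hnonneg (by simp only [stats, Prod.mk.injEq] at hs; omega)⟩
    rw [count, Nat.card_of_isEmpty, Nat.cast_zero]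

theorem statement18 (n : ℕ) (hn : 5 ≤ n) (k m l j : ℤ) :
    hZ n k m l j
      = hZ (n - 1) (k - 1) (m - 1) l j + hZ (n - 2) (k - 1) m (l - 1) (j - 1)
        + hZ (n - 4) (k - 2) m (l - 2) (j - 4) := by
  rw [show (n : ℤ) - 1 = (n - 1 : ℕ) by omega, show (n : ℤ) - 2 = (n - 2 : ℕ) by omega,
    show (n : ℤ) - 4 = (n - 4 : ℕ) by omega]
  simp only [hZ_natCast, count_eq_add (n := n) (by omega), Prod.mk_sub_mk, sub_zero, Nat.cast_add]
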